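/- Let ρ be an integral rank function on a skeletally small triangulated category C and let κ : C → C/Ker ρ_ob denote the Verdier localisation at the thick subcategory Ker ρ_ob. Then ρ is localising if and only if Ker(κ*|_{mod C}) = Ker ρ̃, where ρ̃ is the additive function on mod C corresponding to ρ. -/

import Mathlib

/-!
Statement 13: Let `ρ` be an integral rank function on a skeletally small triangulated
category `C` and let `κ : C ⥤ D` be the Verdier localisation at the thick subcategory
`Ker ρ_ob`. Then `ρ` is localising iff `Ker (κ*|_{mod C}) = Ker ρ̃`; via Yoneda this says:
`ρ` is localising iff for all `f`, `ρ(f) = 0 ↔ κ(f) = 0`.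
-/

open CategoryTheory CategoryTheory.Limits CategoryTheory.Pretriangulated

universe v u v' u'

variable (C : Type u) [Category.{v} C] [Preadditive C] [HasZeroObject C] [HasShift C ℤ]
  [∀ n : ℤ, (shiftFunctor C n).Additive] [Pretriangulated C] [HasBinaryBiproducts C]
  [EssentiallySmall.{v} C]

/-- A rank function on a triangulated category. -/
structure RankFunction where
  rank : ∀ ⦃X Y : C⦄, (X ⟶ Y) → ℝ
  nonneg : ∀ ⦃X Y : C⦄ (f : X ⟶ Y), 0 ≤ rank f
  additive : ∀ ⦃X₁ Y₁ X₂ Y₂ : C⦄ (f : X₁ ⟶ Y₁) (g : X₂ ⟶ Y₂),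
    rank (biprod.map f g) = rank f + rank g
  rankNullity : ∀ (T : Triangle C), (T ∈ distTriang C) →
    rank T.mor₁ + rank T.mor₂ = rank (𝟙 T.obj₂)
  shiftInv : ∀ ⦃X Y : C⦄ (f : X ⟶ Y),
    rank ((shiftFunctor C (1 : ℤ)).map f) = rank f

/-- The structure `Triangulated.Subcategory` of the older Mathlib (since removed),
restated with its old meaning. -/
structure Triangulated.Subcategory where
  P : C → Prop
  zero' : ∃ (Z : C) (_ : IsZero Z), P Z
  shift (X : C) (n : ℤ) : P X → P (X⟦n⟧)
  ext₂' (T : Triangle C) (_ : T ∈ distTriang C) : P T.obj₁ → P T.obj₃ → ObjectProperty.isoClosure P T.obj₂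

variable {C}

/-- The class of morphisms whose cone satisfies `S.P` (old `Triangulated.Subcategory.W`). -/
def Triangulated.Subcategory.W (S : Triangulated.Subcategory C) : MorphismProperty C :=
  fun X Y f => ∃ (Z : C) (g : Y ⟶ Z) (h : Z ⟶ X⟦(1 : ℤ)⟧)
    (_ : Triangle.mk f g h ∈ distTriang C), S.P Z

/-- Integral rank function. -/
def RankFunction.Integral (ρ : RankFunction C) : Prop :=
  ∀ ⦃X Y : C⦄ (f : X ⟶ Y), ∃ n : ℤ, ρ.rank f = n

/-!
Both sides are statements about the morphisms killed by `κ`. Although `S.W` need not be closed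
under composition (no octahedral axiom is assumed), its multiplicative closure still admits a
calculus of left fractions, so `κ f = 0` iff `f ≫ s = 0` for some `s` in that closure; a
cancellation argument along distinguished triangles shows that this happens iff `f` factors
through an object of `Ker ρ_ob`. On the other hand, if `κ f = 0` then the cones of `f` and of
`0 : X ⟶ Y` become isomorphic in `D`. As `ρ(1_-)` is invariant under such isomorphisms, the cone
formula `ρ(1_{cone f}) = ρ(1_X) + ρ(1_Y) - 2ρ(f)` forces `ρ(f) = 0`. So `κ f = 0 → ρ(f) = 0`
always holds, and being localising is exactly the converse.
-/

namespace CategoryTheory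

namespace MorphismProperty

variable {C D : Type*} [Category C] [Category D] {W : MorphismProperty C}

lemma IsInvertedBy.multiplicativeClosure {F : C ⥤ D} (hF : W.IsInvertedBy F) :
    W.multiplicativeClosure.IsInvertedBy F := by
  intro X Y f hf
  induction hf with
  | of f hf => exact hF f hf
  | id X => rw [F.map_id]; infer_instance
  | comp_of f g _ hg _ =>
      have := hF g hg
      rw [F.map_comp]
      infer_instance

variable (W) in
lemma _root_.CategoryTheory.Functor.IsLocalization.multiplicativeClosure (L : C ⥤ D)
    [L.IsLocalization W] : L.IsLocalization W.multiplicativeClosure :=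
  Functor.IsLocalization.of_equivalence_source L W L _ .refl
    (fun _ _ f hf => W.multiplicativeClosure.le_isoClosure _ (.of f hf))
    (IsInvertedBy.multiplicativeClosure (Localization.inverts L W)) L.leftUnitor

lemma multiplicativeClosure_exists_comp_eq_comp
    (hW : ∀ ⦃X' X Y : C⦄ (s : X' ⟶ X), W s → ∀ f : X' ⟶ Y,
      ∃ (Y' : C) (f' : X ⟶ Y') (s' : Y ⟶ Y'), W s' ∧ f ≫ s' = s ≫ f')
    {X' X : C} {s : X' ⟶ X} (hs : W.multiplicativeClosure s) {Y : C} (f : X' ⟶ Y) :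
    ∃ (Y' : C) (f' : X ⟶ Y') (s' : Y ⟶ Y'), W.multiplicativeClosure s' ∧ f ≫ s' = s ≫ f' := by
  induction hs generalizing Y with
  | of s hs =>
      obtain ⟨Y', f', s', hs', h⟩ := hW s hs f
      exact ⟨Y', f', s', .of s' hs', h⟩
  | id X => exact ⟨Y, f, 𝟙 Y, .id Y, by simp⟩
  | comp_of s₁ s₂ _ hs₂ ih =>
      obtain ⟨Y₁, f₁, t₁, ht₁, h₁⟩ := ih f
      obtain ⟨Y₂, f₂, t₂, ht₂, h₂⟩ := hW s₂ hs₂ f₁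
      exact ⟨Y₂, f₂, t₁ ≫ t₂, .comp_of _ _ ht₁ ht₂, by simp [reassoc_of% h₁, h₂]⟩

lemma multiplicativeClosure_exists_comp_eq_comp_of_comp_eq_comp
    (hW : ∀ ⦃X' X Y : C⦄ (f₁ f₂ : X ⟶ Y) (s : X' ⟶ X), W s → s ≫ f₁ = s ≫ f₂ →
      ∃ (Y' : C) (t : Y ⟶ Y'), W t ∧ f₁ ≫ t = f₂ ≫ t)
    {X' X : C} {s : X' ⟶ X} (hs : W.multiplicativeClosure s) {Y : C} (f₁ f₂ : X ⟶ Y)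
    (h : s ≫ f₁ = s ≫ f₂) :
    ∃ (Y' : C) (t : Y ⟶ Y'), W.multiplicativeClosure t ∧ f₁ ≫ t = f₂ ≫ t := by
  induction hs generalizing Y with
  | of s hs =>
      obtain ⟨Y', t, ht, h⟩ := hW f₁ f₂ s hs h
      exact ⟨Y', t, .of t ht, h⟩
  | id X => exact ⟨Y, 𝟙 Y, .id Y, by simpa using h⟩
  | comp_of s₁ s₂ _ hs₂ ih =>
      obtain ⟨Y₁, t₁, ht₁, h₁⟩ := ih (s₂ ≫ f₁) (s₂ ≫ f₂) (by simpa using h)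
      obtain ⟨Y₂, t₂, ht₂, h₂⟩ := hW (f₁ ≫ t₁) (f₂ ≫ t₁) s₂ hs₂ (by simpa using h₁)
      exact ⟨Y₂, t₁ ≫ t₂, .comp_of _ _ ht₁ ht₂, by simpa using h₂⟩

lemma hasLeftCalculusOfFractions_multiplicativeClosure
    (hW₁ : ∀ ⦃X' X Y : C⦄ (s : X' ⟶ X), W s → ∀ f : X' ⟶ Y,
      ∃ (Y' : C) (f' : X ⟶ Y') (s' : Y ⟶ Y'), W s' ∧ f ≫ s' = s ≫ f')
    (hW₂ : ∀ ⦃X' X Y : C⦄ (f₁ f₂ : X ⟶ Y) (s : X' ⟶ X), W s → s ≫ f₁ = s ≫ f₂ →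
      ∃ (Y' : C) (t : Y ⟶ Y'), W t ∧ f₁ ≫ t = f₂ ≫ t) :
    W.multiplicativeClosure.HasLeftCalculusOfFractions where
  exists_leftFraction _ _ φ := by
    obtain ⟨Y', f', s', hs', h⟩ := multiplicativeClosure_exists_comp_eq_comp hW₁ φ.hs φ.f
    exact ⟨⟨f', s', hs'⟩, h⟩
  ext _ _ _ f₁ f₂ _ hs h := by
    obtain ⟨Y', t, ht, h'⟩ :=
      multiplicativeClosure_exists_comp_eq_comp_of_comp_eq_comp hW₂ hs f₁ f₂ h
    exact ⟨Y', t, ht, h'⟩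

end MorphismProperty

end CategoryTheory

namespace CategoryTheory.ObjectProperty

open ZeroObject

variable {C : Type*} [Category C] (P : ObjectProperty C)

def factorsThrough : MorphismProperty C :=
  fun X Y f => ∃ (K : C) (g : X ⟶ K) (g' : K ⟶ Y), P K ∧ f = g ≫ g'

lemma factorsThrough_zero [HasZeroMorphisms C] [P.ContainsZero] (X Y : C) :
    P.factorsThrough (0 : X ⟶ Y) := by
  obtain ⟨Z, -, hZ⟩ := P.exists_prop_of_containsZero
  exact ⟨Z, 0, 0, hZ, by simp⟩

variable [Preadditive C] [HasZeroObject C] [HasShift C ℤ]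
  [∀ n : ℤ, (shiftFunctor C n).Additive] [Pretriangulated C]

lemma trW_exists_comp_eq_comp {X' X Y : C} (s : X' ⟶ X) (hs : P.trW s) (f : X' ⟶ Y) :
    ∃ (Y' : C) (f' : X ⟶ Y') (s' : Y ⟶ Y'), P.trW s' ∧ f ≫ s' = s ≫ f' := by
  obtain ⟨Z, g, h, hT, hZ⟩ := hs
  obtain ⟨Y', s', f', hT'⟩ := distinguished_cocone_triangle₂ (h ≫ f⟦(1 : ℤ)⟧')
  obtain ⟨b, hb, -⟩ := complete_distinguished_triangle_morphism₂ _ _ hT hT' f (𝟙 Z)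
    (Category.id_comp _).symm
  exact ⟨Y', b, s', ⟨Z, f', _, hT', hZ⟩, hb.symm⟩

lemma trW_exists_comp_eq_comp_of_comp_eq_comp [P.IsStableUnderShift ℤ] {X' X Y : C}
    (f₁ f₂ : X ⟶ Y) (s : X' ⟶ X) (hs : P.trW s) (h : s ≫ f₁ = s ≫ f₂) :
    ∃ (Y' : C) (t : Y ⟶ Y'), P.trW t ∧ f₁ ≫ t = f₂ ≫ t := by
  obtain ⟨Z, g, h', hT, hZ⟩ := hs
  obtain ⟨q, hq⟩ : ∃ q : Z ⟶ Y, f₁ - f₂ = g ≫ q :=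
    Triangle.yoneda_exact₂ _ hT (f₁ - f₂) (by
      change s ≫ (f₁ - f₂) = 0
      rw [Preadditive.comp_sub, h, sub_self])
  obtain ⟨Y', t, u, hT'⟩ := distinguished_cocone_triangle q
  refine ⟨Y', t, trW.mk' P hT' hZ, ?_⟩
  have hqt : q ≫ t = 0 := comp_distTriang_mor_zero₁₂ _ hT'
  rw [← sub_eq_zero, ← Preadditive.sub_comp, hq, Category.assoc, hqt, comp_zero]

instance [P.IsStableUnderShift ℤ] : P.trW.multiplicativeClosure.HasLeftCalculusOfFractions :=
  MorphismProperty.hasLeftCalculusOfFractions_multiplicativeClosure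
    (fun _ _ _ s hs f => P.trW_exists_comp_eq_comp s hs f)
    (fun _ _ _ f₁ f₂ s hs h => P.trW_exists_comp_eq_comp_of_comp_eq_comp f₁ f₂ s hs h)

variable {P}

lemma factorsThrough.add [P.IsTriangulated] [P.IsClosedUnderIsomorphisms] {X Y : C}
    {f f' : X ⟶ Y} (hf : P.factorsThrough f) (hf' : P.factorsThrough f') :
    P.factorsThrough (f + f') := by
  obtain ⟨K, g, g', hK, rfl⟩ := hf
  obtain ⟨K', h, h', hK', rfl⟩ := hf'
  exact ⟨K ⊞ K', biprod.lift g h, biprod.desc g' h',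
    P.ext_of_isTriangulatedClosed₂ _ (binaryBiproductTriangle_distinguished K K') hK hK',
    by simp⟩

lemma factorsThrough_of_comp_eq_zero [P.IsStableUnderShift ℤ] {X Y Y' : C} {s : Y ⟶ Y'}
    (hs : P.trW s) {f : X ⟶ Y} (hf : f ≫ s = 0) : P.factorsThrough f := by
  obtain ⟨Z, m, _, hT, hZ⟩ := (P.trW_iff' s).1 hs
  obtain ⟨u, rfl⟩ := Triangle.coyoneda_exact₂ _ hT f hf
  exact ⟨Z, u, m, hZ, rfl⟩

lemma factorsThrough_of_comp_trW [P.IsTriangulated] [P.IsClosedUnderIsomorphisms]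
    {X Y Y' : C} {s : Y ⟶ Y'} (hs : P.trW s) {f : X ⟶ Y} (hfs : P.factorsThrough (f ≫ s)) :
    P.factorsThrough f := by
  obtain ⟨K, u, v, hK, huv⟩ := hfs
  obtain ⟨Z, g, h, hT, hZ⟩ := hs
  have hsg : s ≫ g = 0 := comp_distTriang_mor_zero₁₂ _ hT
  obtain ⟨E, m, n, hTE⟩ := distinguished_cocone_triangle₁ (v ≫ g)
  have hE : P E := P.ext_of_isTriangulatedClosed₁ _ hTE hK hZ
  obtain ⟨u', hu'⟩ : ∃ u' : X ⟶ E, u = u' ≫ m :=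
    Triangle.coyoneda_exact₂ _ hTE u (by
      change u ≫ v ≫ g = 0
      rw [← Category.assoc, ← huv, Category.assoc, hsg, comp_zero])
  obtain ⟨w, hw⟩ : ∃ w : E ⟶ Y, m ≫ v = w ≫ s :=
    Triangle.coyoneda_exact₂ _ hT (m ≫ v) (by
      change (m ≫ v) ≫ g = 0
      rw [Category.assoc]; exact comp_distTriang_mor_zero₁₂ _ hTE)
  have hfw : (f - u' ≫ w) ≫ s = 0 := by
    rw [Preadditive.sub_comp, Category.assoc, ← hw, huv, hu', Category.assoc, sub_self]
  simpa using (factorsThrough_of_comp_eq_zero ⟨Z, g, h, hT, hZ⟩ hfw).add ⟨E, u', w, hE, rfl⟩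

lemma factorsThrough_of_comp_multiplicativeClosure [P.IsTriangulated]
    [P.IsClosedUnderIsomorphisms] {X Y Y' : C} {s : Y ⟶ Y'}
    (hs : P.trW.multiplicativeClosure s) {f : X ⟶ Y} (hfs : P.factorsThrough (f ≫ s)) :
    P.factorsThrough f := by
  induction hs with
  | of s hs => exact factorsThrough_of_comp_trW hs hfs
  | id Y => simpa using hfs
  | comp_of s₁ s₂ _ hs₂ ih => exact ih (factorsThrough_of_comp_trW hs₂ (by simpa using hfs))

variable (P)

section

variable {D : Type*} [Category D] [HasZeroMorphisms D] (L : C ⥤ D) [L.PreservesZeroMorphisms]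
  [L.IsLocalization P.trW]

lemma isZero_obj_of_prop [P.IsStableUnderShift ℤ] {K : C} (hK : P K) : IsZero (L.obj K) := by
  have : IsIso (L.map (0 : K ⟶ 0)) :=
    Localization.inverts L P.trW _ (trW.mk' P (contractible_distinguished K) hK)
  exact (L.map_isZero (isZero_zero C)).of_iso (asIso (L.map (0 : K ⟶ 0)))

lemma map_eq_zero_iff_factorsThrough [P.IsTriangulated] [P.IsClosedUnderIsomorphisms]
    {X Y : C} (f : X ⟶ Y) : L.map f = 0 ↔ P.factorsThrough f := by
  constructor
  · intro hf
    have := Functor.IsLocalization.multiplicativeClosure P.trW L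
    obtain ⟨Z, s, hs, hfs⟩ := (MorphismProperty.map_eq_iff_postcomp L
      P.trW.multiplicativeClosure f 0).1 (by rw [hf, L.map_zero])
    exact factorsThrough_of_comp_multiplicativeClosure hs
      (by rw [hfs, zero_comp]; exact P.factorsThrough_zero _ _)
  · rintro ⟨K, g, g', hK, rfl⟩
    rw [L.map_comp, (P.isZero_obj_of_prop L hK).eq_of_src (L.map g') 0, comp_zero]

lemma prop_of_isZero_obj [P.IsTriangulated] [P.IsStableUnderRetracts] {X : C}
    (hX : IsZero (L.obj X)) : P X := by
  obtain ⟨K, i, r, hK, hir⟩ :=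
    (P.map_eq_zero_iff_factorsThrough L (𝟙 X)).1 (by rw [L.map_id]; exact hX.eq_of_src _ _)
  exact P.prop_of_retract ⟨i, r, hir.symm⟩ hK

end

lemma trW_of_isIso_map {D : Type*} [Category D] [Preadditive D] [HasZeroObject D]
    [HasShift D ℤ] [∀ n : ℤ, (shiftFunctor D n).Additive] [Pretriangulated D] (L : C ⥤ D)
    [L.CommShift ℤ] [L.IsTriangulated] [L.IsLocalization P.trW]
    [P.IsTriangulated] [P.IsStableUnderRetracts] {X Y : C} (s : X ⟶ Y) [IsIso (L.map s)] :
    P.trW s := by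
  obtain ⟨Z, g, h, hT⟩ := distinguished_cocone_triangle s
  exact trW.mk P hT (P.prop_of_isZero_obj L
    (Triangle.isZero₃_of_isIso₁ _ (L.map_distinguished _ hT) ‹_›))

end CategoryTheory.ObjectProperty

namespace RankFunction

open ZeroObject

variable {C : Type*} [Category C] [Preadditive C] [HasZeroObject C] [HasShift C ℤ]
  [∀ n : ℤ, (shiftFunctor C n).Additive] [Pretriangulated C] [HasBinaryBiproducts C]
  (ρ : RankFunction C)

lemma rank_le_rank_id_target {X Y : C} (f : X ⟶ Y) : ρ.rank f ≤ ρ.rank (𝟙 Y) := by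
  obtain ⟨Z, g, h, hT⟩ := distinguished_cocone_triangle f
  have : ρ.rank f + ρ.rank g = ρ.rank (𝟙 Y) := ρ.rankNullity _ hT
  linarith [ρ.nonneg g]

lemma rank_le_rank_id_source {X Y : C} (f : X ⟶ Y) : ρ.rank f ≤ ρ.rank (𝟙 X) := by
  obtain ⟨Z, g, h, hT⟩ := distinguished_cocone_triangle₁ f
  have : ρ.rank g + ρ.rank f = ρ.rank (𝟙 X) := ρ.rankNullity _ hT
  linarith [ρ.nonneg g]

lemma rank_isIso_comp {X' X Y : C} (e : X' ⟶ X) [IsIso e] (f : X ⟶ Y) :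
    ρ.rank (e ≫ f) = ρ.rank f := by
  obtain ⟨Z, g, h, hT⟩ := distinguished_cocone_triangle f
  have hT' : Triangle.mk (e ≫ f) g (h ≫ (inv e)⟦(1 : ℤ)⟧') ∈ distTriang C :=
    isomorphic_distinguished _ hT _ (Triangle.isoMk _ _ (asIso e : X' ≅ X) (Iso.refl _)
      (Iso.refl _) (by simp [Triangle.mk]) (by simp [Triangle.mk]) (by simp [Triangle.mk]))
  have h₁ : ρ.rank f + ρ.rank g = ρ.rank (𝟙 Y) := ρ.rankNullity _ hT
  have h₂ : ρ.rank (e ≫ f) + ρ.rank g = ρ.rank (𝟙 Y) := ρ.rankNullity _ hT'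
  linarith

lemma rank_of_isIso {X Y : C} (e : X ⟶ Y) [IsIso e] : ρ.rank e = ρ.rank (𝟙 Y) := by
  simpa using ρ.rank_isIso_comp e (𝟙 Y)

lemma rank_id_eq_of_iso {X Y : C} (e : X ≅ Y) : ρ.rank (𝟙 X) = ρ.rank (𝟙 Y) := by
  have h₁ := ρ.rank_le_rank_id_source e.hom
  have h₂ := ρ.rank_le_rank_id_source e.inv
  rw [ρ.rank_of_isIso] at h₁ h₂
  linarith

lemma rank_id_of_isZero {X : C} (hX : IsZero X) : ρ.rank (𝟙 X) = 0 := by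
  have h : ρ.rank (𝟙 (0 : C)) + ρ.rank (0 : (0 : C) ⟶ 0) = ρ.rank (𝟙 (0 : C)) :=
    ρ.rankNullity _ (contractible_distinguished 0)
  rw [(isZero_zero C).eq_of_src 0 (𝟙 0)] at h
  rw [ρ.rank_id_eq_of_iso (hX.iso (isZero_zero C))]
  linarith

lemma rank_neg {X Y : C} (f : X ⟶ Y) : ρ.rank (-f) = ρ.rank f := by
  have : IsIso (-𝟙 X) := ⟨-𝟙 X, by simp, by simp⟩
  simpa using ρ.rank_isIso_comp (-𝟙 X) f

lemma rank_id_shift (X : C) (n : ℤ) : ρ.rank (𝟙 (X⟦n⟧)) = ρ.rank (𝟙 X) := by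
  have shift_one (Y : C) : ρ.rank (𝟙 (Y⟦(1 : ℤ)⟧)) = ρ.rank (𝟙 Y) := by
    simpa using ρ.shiftInv (𝟙 Y)
  induction n using Int.induction_on with
  | zero => exact ρ.rank_id_eq_of_iso ((shiftFunctorZero C ℤ).app X)
  | succ i ih =>
      have e : X⟦(i : ℤ) + 1⟧ ≅ X⟦(i : ℤ)⟧⟦(1 : ℤ)⟧ := (shiftFunctorAdd' C _ 1 _ rfl).app X
      rw [ρ.rank_id_eq_of_iso e, shift_one, ih]
  | pred i ih =>
      have e : X⟦-(i : ℤ) - 1⟧⟦(1 : ℤ)⟧ ≅ X⟦-(i : ℤ)⟧ :=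
        ((shiftFunctorAdd' C _ 1 _ (by omega)).app X).symm
      rw [← ih, ← ρ.rank_id_eq_of_iso e, shift_one]

lemma rank_id_biprod (X Y : C) : ρ.rank (𝟙 (X ⊞ Y)) = ρ.rank (𝟙 X) + ρ.rank (𝟙 Y) := by
  rw [← ρ.additive]
  congr 1
  ext <;> simp

lemma rank_id_obj₃ (T : Triangle C) (hT : T ∈ distTriang C) :
    ρ.rank (𝟙 T.obj₃) = ρ.rank (𝟙 T.obj₁) + ρ.rank (𝟙 T.obj₂) - 2 * ρ.rank T.mor₁ := by
  have h₁ : ρ.rank T.mor₁ + ρ.rank T.mor₂ = ρ.rank (𝟙 T.obj₂) := ρ.rankNullity _ hT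
  have h₂ : ρ.rank T.mor₂ + ρ.rank T.mor₃ = ρ.rank (𝟙 T.obj₃) :=
    ρ.rankNullity _ (rot_of_distTriang _ hT)
  have h₃ : ρ.rank T.mor₃ + ρ.rank (-T.mor₁⟦(1 : ℤ)⟧') = ρ.rank (𝟙 (T.obj₁⟦(1 : ℤ)⟧)) :=
    ρ.rankNullity _ (rot_of_distTriang _ (rot_of_distTriang _ hT))
  rw [ρ.rank_neg, ρ.shiftInv, ρ.rank_id_shift] at h₃
  linarith

lemma rank_id_obj₂_of_mor₃_eq_zero (T : Triangle C) (hT : T ∈ distTriang C) (h : T.mor₃ = 0) :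
    ρ.rank (𝟙 T.obj₂) = ρ.rank (𝟙 T.obj₁) + ρ.rank (𝟙 T.obj₃) := by
  obtain ⟨e, -, -⟩ := exists_iso_binaryBiproduct_of_distTriang T hT h
  rw [ρ.rank_id_eq_of_iso e, ρ.rank_id_biprod]

lemma rank_id_le_of_retract {X Y : C} (r : Retract X Y) : ρ.rank (𝟙 X) ≤ ρ.rank (𝟙 Y) := by
  obtain ⟨Z, g, h, hT⟩ := distinguished_cocone_triangle r.i
  have : ρ.rank (𝟙 Y) = ρ.rank (𝟙 X) + ρ.rank (𝟙 Z) :=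
    ρ.rank_id_obj₂_of_mor₃_eq_zero _ hT
      (Triangle.mor₃_eq_zero_of_mono₁ _ hT (inferInstance : Mono r.i))
  linarith [ρ.nonneg (𝟙 Z)]

/-- `Ker ρ_ob` -/
def kerObj : ObjectProperty C := fun X => ρ.rank (𝟙 X) = 0

instance : ρ.kerObj.IsTriangulated where
  exists_zero := ⟨0, isZero_zero C, ρ.rank_id_of_isZero (isZero_zero C)⟩
  isStableUnderShiftBy n := ⟨fun X (hX : ρ.rank (𝟙 X) = 0) => (ρ.rank_id_shift X n).trans hX⟩
  ext₂' T hT (h₁ : ρ.rank (𝟙 T.obj₁) = 0) (h₃ : ρ.rank (𝟙 T.obj₃) = 0) := by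
    refine ρ.kerObj.le_isoClosure _ (le_antisymm ?_ (ρ.nonneg _))
    have := ρ.rankNullity _ hT
    linarith [ρ.rank_le_rank_id_source T.mor₁, ρ.rank_le_rank_id_target T.mor₂]

instance : ρ.kerObj.IsStableUnderRetracts where
  of_retract r (hY : ρ.rank (𝟙 _) = 0) :=
    le_antisymm (hY ▸ ρ.rank_id_le_of_retract r) (ρ.nonneg _)

lemma rank_id_eq_of_trW {X Y : C} {s : X ⟶ Y} (hs : ρ.kerObj.trW s) :
    ρ.rank (𝟙 X) = ρ.rank (𝟙 Y) := by
  obtain ⟨Z, g, h, hT, hZ : ρ.rank (𝟙 Z) = 0⟩ := hs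
  have : ρ.rank (𝟙 Z) = ρ.rank (𝟙 X) + ρ.rank (𝟙 Y) - 2 * ρ.rank s := ρ.rank_id_obj₃ _ hT
  linarith [ρ.rank_le_rank_id_source s, ρ.rank_le_rank_id_target s]

variable {D : Type*} [Category D] [Preadditive D] [HasZeroObject D] [HasShift D ℤ]
  [∀ n : ℤ, (shiftFunctor D n).Additive] [Pretriangulated D]
  (L : C ⥤ D) [L.CommShift ℤ] [L.IsTriangulated] [L.IsLocalization ρ.kerObj.trW]

lemma rank_id_eq_of_iso_obj {X Y : C} (e : L.obj X ≅ L.obj Y) :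
    ρ.rank (𝟙 X) = ρ.rank (𝟙 Y) := by
  have := Functor.IsLocalization.multiplicativeClosure ρ.kerObj.trW L
  obtain ⟨φ, hφ⟩ := Localization.exists_leftFraction L ρ.kerObj.trW.multiplicativeClosure e.hom
  have : IsIso (L.map φ.s) := Localization.inverts L _ _ φ.hs
  have : IsIso (L.map φ.f) := by
    rw [← φ.map_comp_map_s L (Localization.inverts L _), ← hφ]
    infer_instance
  rw [ρ.rank_id_eq_of_trW (ρ.kerObj.trW_of_isIso_map L φ.f),
    ρ.rank_id_eq_of_trW (ρ.kerObj.trW_of_isIso_map L φ.s)]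

lemma rank_eq_zero_of_map_eq_zero {X Y : C} {f : X ⟶ Y} (hf : L.map f = 0) : ρ.rank f = 0 := by
  obtain ⟨Z, g, h, hT⟩ := distinguished_cocone_triangle f
  obtain ⟨Z₀, g₀, h₀, hT₀⟩ := distinguished_cocone_triangle (0 : X ⟶ Y)
  obtain ⟨e, -, -⟩ := exists_iso_of_arrow_iso _ _ (L.map_distinguished _ hT)
    (L.map_distinguished _ hT₀) (Arrow.isoMk (Iso.refl _) (Iso.refl _) (by
      change 𝟙 _ ≫ L.map 0 = L.map f ≫ 𝟙 _
      simp [hf]))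
  have hZ : ρ.rank (𝟙 Z) = ρ.rank (𝟙 Z₀) := ρ.rank_id_eq_of_iso_obj L (Triangle.π₃.mapIso e)
  have h₁ : ρ.rank (𝟙 Z) = ρ.rank (𝟙 X) + ρ.rank (𝟙 Y) - 2 * ρ.rank f := ρ.rank_id_obj₃ _ hT
  -- the cone of a zero morphism `X ⟶ Y` is `Y ⊞ X⟦1⟧`
  have h₂ : ρ.rank (𝟙 Z₀) = ρ.rank (𝟙 Y) + ρ.rank (𝟙 (X⟦(1 : ℤ)⟧)) :=
    ρ.rank_id_obj₂_of_mor₃_eq_zero _ (rot_of_distTriang _ hT₀) (by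
      change -(0 : X ⟶ Y)⟦(1 : ℤ)⟧' = 0
      simp)
  rw [ρ.rank_id_shift] at h₂
  linarith

end RankFunction

theorem localising_iff_kernel_of_verdier_localisation
    (ρ : RankFunction C) (hint : ρ.Integral)
    -- the thick subcategory `Ker ρ_ob`
    (S : Triangulated.Subcategory C) (hS : ∀ X : C, S.P X ↔ ρ.rank (𝟙 X) = 0)
    -- the Verdier localisation `κ : C ⥤ D` at `Ker ρ_ob`
    {D : Type u'} [Category.{v'} D] [Preadditive D] [HasZeroObject D] [HasShift D ℤ]
    [∀ n : ℤ, (shiftFunctor D n).Additive] [Pretriangulated D]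
    (κ : C ⥤ D) [κ.CommShift ℤ] [κ.IsTriangulated] [κ.IsLocalization S.W] :
    -- `ρ` is localising (integrality being assumed) iff `Ker (κ*|mod C) = Ker ρ̃`,
    -- i.e. (via Yoneda) iff vanishing of `ρ` on a morphism is the same as the morphism
    -- being killed by `κ`:
    (∀ ⦃X Y : C⦄ (f : X ⟶ Y), ρ.rank f = 0 →
      ∃ (K : C) (g : X ⟶ K) (g' : K ⟶ Y), ρ.rank (𝟙 K) = 0 ∧ f = g ≫ g') ↔
    (∀ ⦃X Y : C⦄ (f : X ⟶ Y), ρ.rank f = 0 ↔ κ.map f = 0) := by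
  have hW : S.W = ρ.kerObj.trW := by
    ext X Y f
    exact exists_congr fun Z => by simp only [hS]; rfl
  have : κ.IsLocalization ρ.kerObj.trW := hW ▸ inferInstance
  have hann {X Y : C} (f : X ⟶ Y) := ρ.kerObj.map_eq_zero_iff_factorsThrough κ f
  constructor
  · intro hloc X Y f
    exact ⟨fun hf => (hann f).2 (hloc f hf), ρ.rank_eq_zero_of_map_eq_zero κ⟩
  · intro hiff X Y f hf
    exact (hann f).1 ((hiff f).1 hf)
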